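/- An A-module M is simultaneously a-torsion and a-reduced if and only if aM = 0. Dually, M is simultaneously a-adically complete and a-coreduced if and only if aM = 0. -/
import Mathlib


/-- `M` is `a`-reduced. -/
def IsAReduced {A : Type*} [CommRing A] (a : Ideal A)
    (M : Type*) [AddCommGroup M] [Module A M] : Prop :=
  ∀ x ∈ a, ∀ m : M, x ^ 2 • m = 0 → x • m = 0

/-- `M` is `a`-coreduced: `aM = a²M`. -/
def IsACoreduced {A : Type*} [CommRing A] (a : Ideal A)
    (M : Type*) [AddCommGroup M] [Module A M] : Prop :=
  a • (⊤ : Submodule A M) = (a ^ 2) • (⊤ : Submodule A M)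

/-- `M` is `a`-torsion: every element is annihilated by some power of `a`. -/
def IsATorsion {A : Type*} [CommRing A] (a : Ideal A)
    (M : Type*) [AddCommGroup M] [Module A M] : Prop :=
  ∀ m : M, ∃ k : ℕ, ∀ x ∈ a ^ (k + 1), x • m = 0

private lemma aux_smul_bot {A : Type*} [CommRing A] {a : Ideal A}
    {M : Type*} [AddCommGroup M] [Module A M]
    (h : ∀ x ∈ a, ∀ m : M, x • m = 0) : a • (⊤ : Submodule A M) = ⊥ := by
  rw [eq_bot_iff]
  exact Submodule.smul_le.mpr fun r hr m _ => (h r hr m) ▸ Submodule.zero_mem ⊥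

private lemma aux_smul_bot' {A : Type*} [CommRing A] {a : Ideal A}
    {M : Type*} [AddCommGroup M] [Module A M]
    (h : a • (⊤ : Submodule A M) = ⊥) : ∀ x ∈ a, ∀ m : M, x • m = 0 := by
  intro x hx m
  have : x • m ∈ a • (⊤ : Submodule A M) := Submodule.smul_mem_smul hx trivial
  rw [h] at this
  simpa using this

private lemma aux_descend {A : Type*} [CommRing A] {a : Ideal A}
    {M : Type*} [AddCommGroup M] [Module A M] (hred : IsAReduced a M)
    {x : A} (hx : x ∈ a) {m : M} :
    ∀ n : ℕ, x ^ (n + 1) • m = 0 → x • m = 0 := by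
  intro n
  induction n with
  | zero => simp
  | succ n ih =>
    intro h
    apply ih
    have h2 : x ^ 2 • (x ^ n • m) = 0 := by
      rw [smul_smul, ← pow_add, show 2 + n = n + 1 + 1 by omega]
      exact h
    have := hred x hx (x ^ n • m) h2
    rw [smul_smul, ← pow_succ'] at this
    exact this

theorem stmt10 {A : Type*} [CommRing A] (a : Ideal A)
    (M : Type*) [AddCommGroup M] [Module A M] :
    ((IsATorsion a M ∧ IsAReduced a M) ↔ a • (⊤ : Submodule A M) = ⊥) ∧
    ((IsAdicComplete a M ∧ IsACoreduced a M) ↔ a • (⊤ : Submodule A M) = ⊥) := by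
  constructor
  · constructor
    · rintro ⟨htor, hred⟩
      apply aux_smul_bot
      intro x hx m
      obtain ⟨k, hk⟩ := htor m
      exact aux_descend hred hx k (hk _ (Ideal.pow_mem_pow hx _))
    · intro h
      refine ⟨fun m => ⟨0, fun x hx => ?_⟩, fun x hx m _ => aux_smul_bot' h x hx m⟩
      rw [pow_one] at hx
      exact aux_smul_bot' h x hx m
  · constructor
    · rintro ⟨hcomp, hcored⟩
      have hpow : ∀ k : ℕ, a • (⊤ : Submodule A M) = a ^ (k + 1) • (⊤ : Submodule A M) := by
        intro k
        induction k with
        | zero => simp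
        | succ k ih =>
          calc a • (⊤ : Submodule A M) = a ^ 2 • ⊤ := hcored
            _ = a • (a • ⊤) := by rw [pow_two]; exact Submodule.smul_assoc a a ⊤
            _ = a • (a ^ (k + 1) • ⊤) := by rw [ih]
            _ = a ^ (k + 1 + 1) • ⊤ := by
                conv_rhs => rw [pow_succ']
                exact (Submodule.smul_assoc a (a ^ (k + 1)) (⊤ : Submodule A M)).symm
      rw [eq_bot_iff]
      intro m hm
      rw [Submodule.mem_bot]
      apply hcomp.haus' m
      intro n
      rw [SModEq.zero]
      cases n with
      | zero => simp
      | succ n => exact (hpow n) ▸ hm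
    · intro h
      have hbot : ∀ n : ℕ, a ^ (n + 1) • (⊤ : Submodule A M) = ⊥ := by
        intro n
        rw [eq_bot_iff, pow_succ']
        calc (a • a ^ n) • (⊤ : Submodule A M) = a • (a ^ n • ⊤) := Submodule.smul_assoc _ _ _
          _ ≤ a • ⊤ := Submodule.smul_mono le_rfl le_top
          _ = ⊥ := h
      refine ⟨?_, ?_⟩
      · haveI hh : IsHausdorff a M := ⟨fun m hm => ?_⟩
        · haveI hp : IsPrecomplete a M := ⟨fun f hf => ⟨f 1, fun n => ?_⟩⟩
          · constructor
          · cases n with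
            | zero =>
              have ht : (a ^ 0 • ⊤ : Submodule A M) = ⊤ := by simp
              rw [ht]; exact SModEq.top
            | succ n =>
              have h1 : f 1 ≡ f (n + 1) [SMOD (a ^ 1 • ⊤ : Submodule A M)] := hf (by omega)
              rw [pow_one, h, SModEq.sub_mem, Submodule.mem_bot, sub_eq_zero] at h1
              rw [SModEq.sub_mem, hbot, Submodule.mem_bot, sub_eq_zero]
              exact h1.symm
        have := hm 1
        rw [pow_one, h, SModEq.zero, Submodule.mem_bot] at this
        exact this
      · unfold IsACoreduced
        have : (a ^ 2) • (⊤ : Submodule A M) = ⊥ := by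
          calc a ^ 2 • (⊤ : Submodule A M) = a • (a • ⊤) := by
                rw [pow_two]; exact Submodule.smul_assoc a a ⊤
            _ = a • (⊥ : Submodule A M) := by rw [h]
            _ = ⊥ := by simp
        rw [h, this]
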